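/- (Lemma 4.) Suppose Assumption 2 (identifiability) holds with constant η > 0, and let T0 := 2K²ι/η². If the dataset D consists of n > T0 i.i.d. triples collected with the uniform policy, then with probability at least 1 − δ the empirical maximizer (π̂, ψ̂) satisfies V̂_D(π̂,ψ̂) − V̂_D(π_u,ψ̂) > V(π_u) + K·ε_D. -/

import Mathlib

open MeasureTheory ENNReal Finset

noncomputable section

namespace IGL

variable {X Y : Type*} [MeasurableSpace X] [MeasurableSpace Y] {K : ℕ}

/-- A (stochastic) policy: for each context `x`, `π x` is a probability vector over actions. -/
def IsPolicy (K : ℕ) (π : X → Fin K → ℝ) : Prop :=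
  (∀ a, Measurable fun x => π x a) ∧ (∀ x a, 0 ≤ π x a) ∧ ∀ x, ∑ a, π x a = 1

/-- A reward decoder: a measurable function `ψ : Y → [0,1]`. -/
def IsDecoder (ψ : Y → ℝ) : Prop :=
  Measurable ψ ∧ ∀ y, ψ y ∈ Set.Icc (0 : ℝ) 1

/-- The uniform policy `π_u(a|x) = 1/K`. -/
def uniformPolicy (X : Type*) (K : ℕ) : X → Fin K → ℝ := fun _ _ => (K : ℝ)⁻¹

/-- The value `V(π) = E_{x ~ d0}[∑_a π(a|x) R(x,a)]` of a policy. -/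
def polValue (d0 : Measure X) (R : X → Fin K → ℝ) (π : X → Fin K → ℝ) : ℝ :=
  ∫ x, ∑ a, π x a * R x a ∂d0

/-- `Δψ = ∫ ψ dν1 - ∫ ψ dν0`. -/
def deltaPsi (ν1 ν0 : Measure Y) (ψ : Y → ℝ) : ℝ :=
  (∫ y, ψ y ∂ν1) - ∫ y, ψ y ∂ν0

/-- The decoded value `V(π,ψ) = E[ψ(y)]` under the IGL generative process: `x ~ d0`,
`a ~ π(·|x)`, `r ~ Bernoulli(R(x,a))`, `y ~ ν1` if `r = 1`, `y ~ ν0` if `r = 0`. -/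
def decValue (d0 : Measure X) (R : X → Fin K → ℝ) (ν1 ν0 : Measure Y)
    (π : X → Fin K → ℝ) (ψ : Y → ℝ) : ℝ :=
  ∫ x, ∑ a, π x a * (R x a * (∫ y, ψ y ∂ν1) + (1 - R x a) * ∫ y, ψ y ∂ν0) ∂d0

/-- Law of the feedback `y` given that the latent Bernoulli reward has mean `p`. -/
def feedback (ν1 ν0 : Measure Y) (p : ℝ) : Measure Y :=
  ENNReal.ofReal p • ν1 + ENNReal.ofReal (1 - p) • ν0

/-- Law of one sample `(x, a, y)`: `x ~ d0`, `a ~ q(·|x)`, and `y` drawn from the IGL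
generative process (Assumption 1: `y ⟂ (x,a) | r`). -/
def sampleLaw (d0 : Measure X) (q : X → Fin K → ℝ) (R : X → Fin K → ℝ)
    (ν1 ν0 : Measure Y) : Measure (X × Fin K × Y) :=
  d0.bind fun x => Measure.sum fun a : Fin K =>
    ENNReal.ofReal (q x a) • (feedback ν1 ν0 (R x a)).map fun y => (x, a, y)

/-- Law of a dataset of `n` i.i.d. samples. -/
def dataLaw (n : ℕ) (μ : Measure (X × Fin K × Y)) : Measure (Fin n → X × Fin K × Y) :=
  Measure.pi fun _ => μ

/-- The empirical estimator for uniform-policy data: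
`V̂_D(π,ψ) = (1/n) ∑_i K·π(a_i|x_i)·ψ(y_i)`. -/
def VhatU (n : ℕ) (K : ℕ) (D : Fin n → X × Fin K × Y) (π : X → Fin K → ℝ) (ψ : Y → ℝ) : ℝ :=
  (n : ℝ)⁻¹ * ∑ i, (K : ℝ) * π (D i).1 (D i).2.1 * ψ (D i).2.2

/-- The empirical estimator of the value of the uniform policy:
`V̂_D(π_u,ψ) = (1/n) ∑_i ψ(y_i)`. -/
def VhatU0 (n : ℕ) {K : ℕ} (D : Fin n → X × Fin K × Y) (ψ : Y → ℝ) : ℝ :=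
  (n : ℝ)⁻¹ * ∑ i, ψ (D i).2.2

/-- `ι := log(2|Π||Ψ|/δ)`. -/
def iotaC (NPol NDec : ℕ) (δ : ℝ) : ℝ := Real.log (2 * NPol * NDec / δ)

/-- `ε_D := √(ι/(2n))`. -/
def epsD (NPol NDec : ℕ) (δ : ℝ) (n : ℕ) : ℝ := Real.sqrt (iotaC NPol NDec δ / (2 * n))

/-! Under uniform exploration the per-sample statistic `gapSample K π⋆ ψ⋆`, whose empirical
mean is `V̂_D(π⋆,ψ⋆) − V̂_D(π_u,ψ⋆)`, lies in `[-1, K-1]` and has mean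
`(V(π⋆) − V(π_u))·Δψ⋆ ≥ V(π_u) + η`. Hoeffding's inequality keeps the empirical mean above
its expectation minus `K·ε_D` outside an event of probability `exp(−ι) ≤ δ`, and the warm-start
condition `n > T₀` says exactly that `2K·ε_D < η`. The empirical maximiser does at least as
well as `(π⋆, ψ⋆)`. -/

open ProbabilityTheory

section Probability

variable {Ω : Type*} [MeasurableSpace Ω]

theorem measureReal_sum_le_sub_le_of_mem_Icc (μ : Measure Ω) [IsProbabilityMeasure μ]
    {Z : Ω → ℝ} (hZ : AEMeasurable Z μ) {a b : ℝ} (hab : ∀ᵐ ω ∂μ, Z ω ∈ Set.Icc a b) (n : ℕ)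
    {s : ℝ} (hs : 0 ≤ s) :
    (Measure.pi fun _ : Fin n => μ).real {D | ∑ i, Z (D i) ≤ n * μ[Z] - s}
      ≤ Real.exp (-2 * s ^ 2 / (n * (b - a) ^ 2)) := by
  have hcentred : HasSubgaussianMGF (fun ω => μ[Z] - Z ω) ((‖b - a‖₊ / 2) ^ 2) μ := by
    simpa [Pi.neg_def] using (hasSubgaussianMGF_of_mem_Icc hZ hab).neg
  have hcoord (i : Fin n) : HasSubgaussianMGF (fun D : Fin n → Ω => μ[Z] - Z (D i))
      ((‖b - a‖₊ / 2) ^ 2) (Measure.pi fun _ => μ) := by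
    refine HasSubgaussianMGF.of_map (X := fun ω => μ[Z] - Z ω) (Y := fun D : Fin n → Ω => D i)
      (measurable_pi_apply i).aemeasurable ?_
    rwa [(measurePreserving_eval (fun _ : Fin n => μ) i).map_eq]
  have hindep := iIndepFun_pi (μ := fun _ : Fin n => μ) (X := fun _ ω => μ[Z] - Z ω)
    fun _ => hZ.const_sub _
  convert HasSubgaussianMGF.measure_sum_ge_le_of_iIndepFun hindep (s := Finset.univ)
    (fun i _ => hcoord i) hs using 2
  · ext D
    simp only [Set.mem_ofPred_eq, Finset.sum_sub_distrib, Finset.sum_const, Finset.card_univ,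
      Fintype.card_fin, nsmul_eq_mul]
    constructor <;> intro h <;> linarith
  · push_cast [Finset.sum_const, Finset.card_univ, Fintype.card_fin, nsmul_eq_mul]
    rw [Real.norm_eq_abs, div_pow, sq_abs,
      show (2 : ℝ) * (n * ((b - a) ^ 2 / 2 ^ 2)) = n * (b - a) ^ 2 / 2 by ring,
      div_div_eq_mul_div]
    ring

theorem ofReal_one_sub_le_of_measureReal_le {μ : Measure Ω} [IsProbabilityMeasure μ]
    {B S : Set Ω} {δ : ℝ} (hBS : Bᶜ ⊆ S) (hB : μ.real B ≤ δ) : ENNReal.ofReal (1 - δ) ≤ μ S := by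
  have hcover := measureReal_union_le (μ := μ) B Bᶜ
  rw [Set.union_compl_self, probReal_univ] at hcover
  rw [← ofReal_measureReal]
  exact ENNReal.ofReal_le_ofReal (by linarith [measureReal_mono (μ := μ) hBS])

variable {β : Type*} [MeasurableSpace β] {μ : Measure Ω} {κ : Ω → Measure β}

theorem isProbabilityMeasure_bind [IsProbabilityMeasure μ] (hκ : Measurable κ)
    (h : ∀ ω, IsProbabilityMeasure (κ ω)) : IsProbabilityMeasure (μ.bind κ) :=
  have : IsMarkovKernel (⟨κ, hκ⟩ : Kernel Ω β) := ⟨h⟩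
  inferInstanceAs (IsProbabilityMeasure ((⟨κ, hκ⟩ : Kernel Ω β) ∘ₘ μ))

theorem integral_bind {E : Type*} [NormedAddCommGroup E] [NormedSpace ℝ E] (hκ : Measurable κ)
    {g : β → E} (hg : Integrable g (μ.bind κ)) :
    ∫ z, g z ∂μ.bind κ = ∫ ω, ∫ z, g z ∂κ ω ∂μ := by
  change Integrable g ((⟨κ, hκ⟩ : Kernel Ω β) ∘ₘ μ) at hg
  change ∫ z, g z ∂(⟨κ, hκ⟩ : Kernel Ω β) ∘ₘ μ = _
  rw [Measure.comp_eq_comp_const_apply] at hg ⊢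
  exact Kernel.integral_comp hg

end Probability

section Feedback

variable {ν1 ν0 : Measure Y} {p : ℝ}

theorem isProbabilityMeasure_feedback [IsProbabilityMeasure ν1] [IsProbabilityMeasure ν0]
    (hp : p ∈ Set.Icc (0 : ℝ) 1) : IsProbabilityMeasure (feedback ν1 ν0 p) := by
  constructor
  rw [feedback, Measure.add_apply, Measure.smul_apply, Measure.smul_apply, measure_univ,
    measure_univ, smul_eq_mul, smul_eq_mul, mul_one, mul_one,
    ← ENNReal.ofReal_add hp.1 (sub_nonneg.2 hp.2), add_sub_cancel, ENNReal.ofReal_one]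

theorem integral_feedback (hp : p ∈ Set.Icc (0 : ℝ) 1) {f : Y → ℝ} (hf1 : Integrable f ν1)
    (hf0 : Integrable f ν0) :
    ∫ y, f y ∂feedback ν1 ν0 p = p * ∫ y, f y ∂ν1 + (1 - p) * ∫ y, f y ∂ν0 := by
  rw [feedback, integral_add_measure (hf1.smul_measure ENNReal.ofReal_ne_top)
      (hf0.smul_measure ENNReal.ofReal_ne_top), integral_smul_measure, integral_smul_measure,
    ENNReal.toReal_ofReal hp.1, ENNReal.toReal_ofReal (sub_nonneg.2 hp.2), smul_eq_mul,
    smul_eq_mul]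

end Feedback

def sampleFiber (q R : X → Fin K → ℝ) (ν1 ν0 : Measure Y) (x : X) : Measure (X × Fin K × Y) :=
  Measure.sum fun a : Fin K =>
    ENNReal.ofReal (q x a) • (feedback ν1 ν0 (R x a)).map fun y => (x, a, y)

theorem sampleLaw_eq_bind (d0 : Measure X) (q R : X → Fin K → ℝ) (ν1 ν0 : Measure Y) :
    sampleLaw d0 q R ν1 ν0 = d0.bind (sampleFiber q R ν1 ν0) := rfl

section SampleFiber

variable {q R : X → Fin K → ℝ} {ν1 ν0 : Measure Y}

theorem measurable_sampleFiber [SFinite ν1] [SFinite ν0] (hq : ∀ a, Measurable fun x => q x a)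
    (hR : ∀ a, Measurable fun x => R x a) : Measurable (sampleFiber q R ν1 ν0) := by
  refine Measure.measurable_of_measurable_coe _ fun s hs => ?_
  have hslice (a : Fin K) : MeasurableSet {xy : X × Y | (xy.1, a, xy.2) ∈ s} :=
    (measurable_fst.prodMk (measurable_const.prodMk measurable_snd)) hs
  have hν (ν : Measure Y) [SFinite ν] (a : Fin K) :
      Measurable fun x => ν (Prod.mk x ⁻¹' {xy : X × Y | (xy.1, a, xy.2) ∈ s}) :=
    measurable_measure_prodMk_left (hslice a)
  have hmap (x : X) (a : Fin K) (μ : Measure Y) : (μ.map fun y => (x, a, y)) s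
      = μ (Prod.mk x ⁻¹' {xy : X × Y | (xy.1, a, xy.2) ∈ s}) :=
    Measure.map_apply (by fun_prop) hs
  simp only [sampleFiber, Measure.sum_apply _ hs, tsum_fintype, Measure.smul_apply, hmap,
    feedback, Measure.add_apply, smul_eq_mul]
  refine Finset.measurable_sum _ fun a _ => ?_
  exact (ENNReal.measurable_ofReal.comp (hq a)).mul
    (((ENNReal.measurable_ofReal.comp (hR a)).mul (hν ν1 a)).add
      ((ENNReal.measurable_ofReal.comp ((hR a).const_sub 1)).mul (hν ν0 a)))

variable [IsProbabilityMeasure ν1] [IsProbabilityMeasure ν0] {x : X}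

theorem isProbabilityMeasure_sampleFiber (hq0 : ∀ a, 0 ≤ q x a) (hq1 : ∑ a, q x a = 1)
    (hR : ∀ a, R x a ∈ Set.Icc (0 : ℝ) 1) : IsProbabilityMeasure (sampleFiber q R ν1 ν0 x) := by
  constructor
  have hmap (a : Fin K) : ((feedback ν1 ν0 (R x a)).map fun y => (x, a, y)) Set.univ = 1 := by
    have := isProbabilityMeasure_feedback (ν1 := ν1) (ν0 := ν0) (hR a)
    rw [Measure.map_apply (by fun_prop) MeasurableSet.univ, Set.preimage_univ, measure_univ]
  simp only [sampleFiber, Measure.sum_apply _ MeasurableSet.univ, tsum_fintype,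
    Measure.smul_apply, hmap, smul_eq_mul, mul_one]
  rw [← ENNReal.ofReal_sum_of_nonneg fun a _ => hq0 a, hq1, ENNReal.ofReal_one]

theorem integral_sampleFiber (hq0 : ∀ a, 0 ≤ q x a) (hq1 : ∑ a, q x a = 1)
    (hR : ∀ a, R x a ∈ Set.Icc (0 : ℝ) 1) {g : X × Fin K × Y → ℝ} (hg : Measurable g) {C : ℝ}
    (hgC : ∀ p, ‖g p‖ ≤ C) :
    ∫ p, g p ∂sampleFiber q R ν1 ν0 x
      = ∑ a, q x a * (R x a * ∫ y, g (x, a, y) ∂ν1 + (1 - R x a) * ∫ y, g (x, a, y) ∂ν0) := by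
  have := isProbabilityMeasure_sampleFiber (ν1 := ν1) (ν0 := ν0) hq0 hq1 hR
  have hint : Integrable g (sampleFiber q R ν1 ν0 x) :=
    .of_bound hg.aestronglyMeasurable C (ae_of_all _ hgC)
  have hslice (ν : Measure Y) [IsProbabilityMeasure ν] (a : Fin K) :
      Integrable (fun y => g (x, a, y)) ν :=
    .of_bound (hg.comp (by fun_prop)).aestronglyMeasurable C (ae_of_all _ fun y => hgC _)
  rw [sampleFiber, integral_sum_measure hint, tsum_fintype]
  refine Finset.sum_congr rfl fun a _ => ?_
  rw [integral_smul_measure, integral_map (by fun_prop) hg.aestronglyMeasurable,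
    integral_feedback (hR a) (hslice ν1 a) (hslice ν0 a), ENNReal.toReal_ofReal (hq0 a),
    smul_eq_mul]

end SampleFiber

theorem IsPolicy.le_one {π : X → Fin K → ℝ} (hπ : IsPolicy K π) (x : X) (a : Fin K) :
    π x a ≤ 1 :=
  hπ.2.2 x ▸ Finset.single_le_sum (fun b _ => hπ.2.1 x b) (Finset.mem_univ a)

theorem isPolicy_uniformPolicy (hK : 0 < K) : IsPolicy K (uniformPolicy X K) :=
  ⟨fun _ => measurable_const, fun _ _ => by simp [uniformPolicy],
    fun _ => by simp [uniformPolicy, hK.ne']⟩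

theorem integrable_policyReward {d0 : Measure X} [IsFiniteMeasure d0] {π R : X → Fin K → ℝ}
    (hπ : IsPolicy K π) (hRmeas : ∀ a, Measurable fun x => R x a)
    (hR : ∀ x a, R x a ∈ Set.Icc (0 : ℝ) 1) : Integrable (fun x => ∑ a, π x a * R x a) d0 :=
  integrable_finsetSum _ fun a _ => .of_mem_Icc 0 1 ((hπ.1 a).mul (hRmeas a)).aemeasurable
    (ae_of_all _ fun x => ⟨mul_nonneg (hπ.2.1 x a) (hR x a).1,
      mul_le_one₀ (hπ.le_one x a) (hR x a).1 (hR x a).2⟩)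

section SampleLaw

variable {d0 : Measure X} [IsProbabilityMeasure d0] {ν1 ν0 : Measure Y} [IsProbabilityMeasure ν1]
  [IsProbabilityMeasure ν0] {q R : X → Fin K → ℝ}

theorem isProbabilityMeasure_sampleLaw (hq : IsPolicy K q)
    (hRmeas : ∀ a, Measurable fun x => R x a) (hR : ∀ x a, R x a ∈ Set.Icc (0 : ℝ) 1) :
    IsProbabilityMeasure (sampleLaw d0 q R ν1 ν0) := by
  rw [sampleLaw_eq_bind]
  exact isProbabilityMeasure_bind (measurable_sampleFiber hq.1 hRmeas)
    fun x => isProbabilityMeasure_sampleFiber (hq.2.1 x) (hq.2.2 x) (hR x)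

theorem integral_sampleLaw (hq : IsPolicy K q) (hRmeas : ∀ a, Measurable fun x => R x a)
    (hR : ∀ x a, R x a ∈ Set.Icc (0 : ℝ) 1) {g : X × Fin K × Y → ℝ} (hg : Measurable g)
    {C : ℝ} (hgC : ∀ p, ‖g p‖ ≤ C) :
    ∫ p, g p ∂sampleLaw d0 q R ν1 ν0 = ∫ x, ∑ a, q x a *
      (R x a * ∫ y, g (x, a, y) ∂ν1 + (1 - R x a) * ∫ y, g (x, a, y) ∂ν0) ∂d0 := by
  have := isProbabilityMeasure_sampleLaw (d0 := d0) (ν1 := ν1) (ν0 := ν0) hq hRmeas hR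
  rw [sampleLaw_eq_bind] at this ⊢
  rw [integral_bind (measurable_sampleFiber hq.1 hRmeas)
    (.of_bound hg.aestronglyMeasurable C (ae_of_all _ hgC))]
  exact integral_congr_ae (ae_of_all _ fun x =>
    integral_sampleFiber (hq.2.1 x) (hq.2.2 x) (hR x) hg hgC)

end SampleLaw

def gapSample (K : ℕ) (π : X → Fin K → ℝ) (ψ : Y → ℝ) (p : X × Fin K × Y) : ℝ :=
  (K * π p.1 p.2.1 - 1) * ψ p.2.2

section Gap

variable {π : X → Fin K → ℝ} {ψ : Y → ℝ}

omit [MeasurableSpace X] [MeasurableSpace Y] in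
theorem VhatU_sub_VhatU0 (n : ℕ) (D : Fin n → X × Fin K × Y) :
    VhatU n K D π ψ - VhatU0 n D ψ = (n : ℝ)⁻¹ * ∑ i, gapSample K π ψ (D i) := by
  rw [VhatU, VhatU0, ← mul_sub, ← Finset.sum_sub_distrib]
  simp only [gapSample]
  ring_nf

theorem measurable_gapSample (hπ : ∀ a, Measurable fun x => π x a) (hψ : Measurable ψ) :
    Measurable (gapSample K π ψ) := by
  have hπ' : Measurable fun xa : X × Fin K => π xa.1 xa.2 :=
    measurable_from_prod_countable_left hπ
  unfold gapSample
  fun_prop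

theorem gapSample_mem_Icc (hπ : IsPolicy K π) (hψ : IsDecoder ψ) (p : X × Fin K × Y) :
    gapSample K π ψ p ∈ Set.Icc (-1 : ℝ) (K - 1) := by
  obtain ⟨x, a, y⟩ := p
  have hK : (1 : ℝ) ≤ K := by exact_mod_cast a.pos
  have h0 := hπ.2.1 x a
  have h1 := hπ.le_one x a
  obtain ⟨hψ0, hψ1⟩ := hψ.2 y
  have hKπψ : 0 ≤ K * π x a * ψ y := by positivity
  have hπψ : π x a * ψ y ≤ 1 := mul_le_one₀ h1 hψ0 hψ1
  constructor <;> simp only [gapSample] <;>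
    nlinarith [mul_nonneg (sub_nonneg.2 hK) (sub_nonneg.2 hπψ), mul_nonneg hψ0 (sub_nonneg.2 h1)]

end Gap

theorem integral_gapSample_uniform {d0 : Measure X} [IsProbabilityMeasure d0]
    {ν1 ν0 : Measure Y} [IsProbabilityMeasure ν1] [IsProbabilityMeasure ν0]
    {R π : X → Fin K → ℝ} {ψ : Y → ℝ} (hK : 0 < K) (hRmeas : ∀ a, Measurable fun x => R x a)
    (hR : ∀ x a, R x a ∈ Set.Icc (0 : ℝ) 1) (hπ : IsPolicy K π) (hψ : IsDecoder ψ) :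
    ∫ p, gapSample K π ψ p ∂sampleLaw d0 (uniformPolicy X K) R ν1 ν0
      = (polValue d0 R π - polValue d0 R (uniformPolicy X K)) * deltaPsi ν1 ν0 ψ := by
  have hKR : (K : ℝ) ≠ 0 := by positivity
  have hbound (p : X × Fin K × Y) : ‖gapSample K π ψ p‖ ≤ K := by
    obtain ⟨hlo, hhi⟩ := gapSample_mem_Icc hπ hψ p
    have : (1 : ℝ) ≤ K := by exact_mod_cast hK
    exact abs_le.2 ⟨by linarith, by linarith⟩
  have hslice (x : X) (a : Fin K) (ν : Measure Y) :
      ∫ y, gapSample K π ψ (x, a, y) ∂ν = (K * π x a - 1) * ∫ y, ψ y ∂ν :=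
    integral_const_mul (K * π x a - 1) ψ
  have hpoint (x : X) :
      ∑ a, uniformPolicy X K x a * (R x a * ∫ y, gapSample K π ψ (x, a, y) ∂ν1
        + (1 - R x a) * ∫ y, gapSample K π ψ (x, a, y) ∂ν0)
      = deltaPsi ν1 ν0 ψ * ((∑ a, π x a * R x a) - ∑ a, uniformPolicy X K x a * R x a) := by
    -- the `ν0`-part carries the weight `π - π_u`, whose total mass is zero
    have hterm (a : Fin K) :
        uniformPolicy X K x a * (R x a * ∫ y, gapSample K π ψ (x, a, y) ∂ν1
          + (1 - R x a) * ∫ y, gapSample K π ψ (x, a, y) ∂ν0)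
        = deltaPsi ν1 ν0 ψ * (π x a * R x a - uniformPolicy X K x a * R x a)
          + (∫ y, ψ y ∂ν0) * (π x a - uniformPolicy X K x a) := by
      rw [hslice, hslice, deltaPsi, uniformPolicy]
      field_simp
      ring
    have hmass : ∑ a, (π x a - uniformPolicy X K x a) = 0 := by
      rw [Finset.sum_sub_distrib, hπ.2.2, (isPolicy_uniformPolicy hK).2.2, sub_self]
    rw [Finset.sum_congr rfl fun a _ => hterm a, Finset.sum_add_distrib, ← Finset.mul_sum,
      ← Finset.mul_sum, hmass, mul_zero, add_zero, Finset.sum_sub_distrib]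
  rw [integral_sampleLaw (isPolicy_uniformPolicy hK) hRmeas hR (measurable_gapSample hπ.1 hψ.1)
      hbound, integral_congr_ae (ae_of_all _ hpoint), integral_const_mul,
    integral_sub (integrable_policyReward hπ hRmeas hR)
      (integrable_policyReward (isPolicy_uniformPolicy hK) hRmeas hR), polValue, polValue,
    mul_comm]

section Constants

variable {NPol NDec : ℕ} {δ : ℝ}

theorem iotaC_pos (hδ : 0 < δ) (hδN : δ < 2 * NPol * NDec) : 0 < iotaC NPol NDec δ :=
  Real.log_pos ((one_lt_div hδ).2 hδN)

theorem exp_neg_iotaC_le (hNPol : 0 < NPol) (hNDec : 0 < NDec) (hδ : 0 < δ) :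
    Real.exp (-iotaC NPol NDec δ) ≤ δ := by
  have hN : (1 : ℝ) ≤ 2 * NPol * NDec := by
    have : (1 : ℝ) ≤ NPol * NDec := by exact_mod_cast Nat.one_le_iff_ne_zero.2 (by positivity)
    linarith
  rw [iotaC, Real.exp_neg, Real.exp_log (by positivity), inv_div]
  exact div_le_self hδ.le hN

theorem sq_epsD (hι : 0 ≤ iotaC NPol NDec δ) (n : ℕ) :
    epsD NPol NDec δ n ^ 2 = iotaC NPol NDec δ / (2 * n) :=
  Real.sq_sqrt (by positivity)

theorem mul_epsD_lt_half {η : ℝ} {n : ℕ} (hη : 0 < η) (hι : 0 ≤ iotaC NPol NDec δ)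
    (hwarm : (n : ℝ) > 2 * K ^ 2 * iotaC NPol NDec δ / η ^ 2) :
    K * epsD NPol NDec δ n < η / 2 := by
  have hn : (0 : ℝ) < n := lt_of_le_of_lt (by positivity) hwarm
  have hwarm' : 2 * K ^ 2 * iotaC NPol NDec δ < n * η ^ 2 := (div_lt_iff₀ (by positivity)).1 hwarm
  have hsq : (K * epsD NPol NDec δ n) ^ 2 < (η / 2) ^ 2 := by
    rw [mul_pow, sq_epsD hι, ← mul_div_assoc, div_lt_iff₀ (by positivity)]
    nlinarith
  exact (pow_lt_pow_iff_left₀ (by unfold epsD; positivity) (by positivity) two_ne_zero).1 hsq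

end Constants

theorem measureReal_sum_gapSample_le {π : X → Fin K → ℝ} {ψ : Y → ℝ} (hK : 0 < K)
    (hπ : IsPolicy K π) (hψ : IsDecoder ψ) (μ : Measure (X × Fin K × Y)) [IsProbabilityMeasure μ]
    {n : ℕ} (hn : 0 < n) {NPol NDec : ℕ} (hNPol : 0 < NPol) (hNDec : 0 < NDec) {δ : ℝ}
    (hδ : 0 < δ) (hι : 0 ≤ iotaC NPol NDec δ) :
    (dataLaw n μ).real {D | ∑ i, gapSample K π ψ (D i)
      ≤ n * μ[gapSample K π ψ] - n * (K * epsD NPol NDec δ n)} ≤ δ := by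
  have hexponent : -2 * (n * (K * epsD NPol NDec δ n)) ^ 2 / (n * ((K : ℝ) - 1 - -1) ^ 2)
      = -iotaC NPol NDec δ := by
    rw [sub_neg_eq_add, sub_add_cancel, mul_pow, mul_pow, sq_epsD hι]
    field_simp
  refine (measureReal_sum_le_sub_le_of_mem_Icc μ (measurable_gapSample hπ.1 hψ.1).aemeasurable
    (ae_of_all _ (gapSample_mem_Icc hπ hψ)) n
    (by have : 0 ≤ epsD NPol NDec δ n := Real.sqrt_nonneg _; positivity)).trans ?_
  rw [hexponent]
  exact exp_neg_iotaC_le hNPol hNDec hδ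

theorem igl_lemma4_warm_start_general
    (hK : 0 < K)
    (d0 : Measure X) [IsProbabilityMeasure d0]
    (ν1 ν0 : Measure Y) [IsProbabilityMeasure ν1] [IsProbabilityMeasure ν0]
    (R : X → Fin K → ℝ) (hRmeas : ∀ a, Measurable fun x => R x a)
    (hR : ∀ x a, R x a ∈ Set.Icc (0 : ℝ) 1)
    {ιPol ιDec : Type*} [Fintype ιPol] [Fintype ιDec]
    (P : ιPol → X → Fin K → ℝ) (hP : ∀ i, IsPolicy K (P i))
    (Ψc : ιDec → Y → ℝ) (hΨ : ∀ j, IsDecoder (Ψc j))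
    -- `π⋆` and `ψ⋆`
    (istar : ιPol)
    (jstar : ιDec)
    -- Assumption 2 (identifiability)
    (η : ℝ) (hη : 0 < η)
    (hident : polValue d0 R (uniformPolicy X K) + η ≤
      (polValue d0 R (P istar) - polValue d0 R (uniformPolicy X K))
        * deltaPsi ν1 ν0 (Ψc jstar))
    (n : ℕ) (δ : ℝ) (hδ : 0 < δ) (hδ1 : δ < 1)
    -- `n > T₀ = 2K²ι/η²`
    (hwarm : (n : ℝ) > 2 * K ^ 2 * iotaC (Fintype.card ιPol) (Fintype.card ιDec) δ / η ^ 2) :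
    ENNReal.ofReal (1 - δ) ≤
      dataLaw n (sampleLaw d0 (uniformPolicy X K) R ν1 ν0)
        {D | ∀ (ihat : ιPol) (jhat : ιDec),
          (∀ (i : ιPol) (j : ιDec),
            VhatU n K D (P i) (Ψc j) - VhatU0 n D (Ψc j)
              ≤ VhatU n K D (P ihat) (Ψc jhat) - VhatU0 n D (Ψc jhat)) →
          VhatU n K D (P ihat) (Ψc jhat) - VhatU0 n D (Ψc jhat)
            > polValue d0 R (uniformPolicy X K)
              + K * epsD (Fintype.card ιPol) (Fintype.card ιDec) δ n} := by
  have hNPol : 0 < Fintype.card ιPol := Fintype.card_pos_iff.2 ⟨istar⟩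
  have hNDec : 0 < Fintype.card ιDec := Fintype.card_pos_iff.2 ⟨jstar⟩
  have hι : 0 < iotaC (Fintype.card ιPol) (Fintype.card ιDec) δ := by
    have h1 : (1 : ℝ) ≤ Fintype.card ιPol := by exact_mod_cast hNPol
    have h2 : (1 : ℝ) ≤ Fintype.card ιDec := by exact_mod_cast hNDec
    exact iotaC_pos hδ (by nlinarith)
  have hKε := mul_epsD_lt_half hη hι.le hwarm
  have hn : (0 : ℝ) < n := lt_of_le_of_lt (by positivity) hwarm
  set μ := sampleLaw d0 (uniformPolicy X K) R ν1 ν0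
  have := isProbabilityMeasure_sampleLaw (d0 := d0) (ν1 := ν1) (ν0 := ν0)
    (isPolicy_uniformPolicy hK) hRmeas hR
  have : IsProbabilityMeasure (dataLaw n μ) := inferInstanceAs (IsProbabilityMeasure (Measure.pi _))
  set Z := gapSample K (P istar) (Ψc jstar)
  have hmean : polValue d0 R (uniformPolicy X K) + η ≤ μ[Z] := by
    rwa [integral_gapSample_uniform hK hRmeas hR (hP istar) (hΨ jstar)]
  refine ofReal_one_sub_le_of_measureReal_le (fun D hD ihat jhat hmax => ?_)
    (measureReal_sum_gapSample_le hK (hP istar) (hΨ jstar) μ (by exact_mod_cast hn) hNPol hNDec hδ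
      hι.le)
  simp only [Set.mem_compl_iff, Set.mem_ofPred_eq, not_le] at hD
  have hgood : μ[Z] - K * epsD (Fintype.card ιPol) (Fintype.card ιDec) δ n
      < (n : ℝ)⁻¹ * ∑ i, Z (D i) := by
    rw [lt_inv_mul_iff₀ hn]
    linarith
  have hstar := hmax istar jstar
  rw [VhatU_sub_VhatU0] at hstar
  linarith

/-- **Lemma 4.** Suppose Assumption 2 (identifiability) holds with constant
`η > 0`, and let `T₀ := 2K²ι/η²`. If the dataset `D` consists of `n > T₀` i.i.d. triples
collected with the uniform policy, then with probability at least `1 − δ` the empirical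
maximizer `(π̂, ψ̂)` satisfies `V̂_D(π̂,ψ̂) − V̂_D(π_u,ψ̂) > V(π_u) + K·ε_D`. -/
theorem igl_lemma4_warm_start
    (hK : 0 < K)
    (d0 : Measure X) [IsProbabilityMeasure d0]
    (ν1 ν0 : Measure Y) [IsProbabilityMeasure ν1] [IsProbabilityMeasure ν0]
    (R : X → Fin K → ℝ) (hRmeas : ∀ a, Measurable fun x => R x a)
    (hR : ∀ x a, R x a ∈ Set.Icc (0 : ℝ) 1)
    {ιPol ιDec : Type*} [Fintype ιPol] [Fintype ιDec] [Nonempty ιPol] [Nonempty ιDec]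
    (P : ιPol → X → Fin K → ℝ) (hP : ∀ i, IsPolicy K (P i))
    (Ψc : ιDec → Y → ℝ) (hΨ : ∀ j, IsDecoder (Ψc j))
    -- `π⋆` and `ψ⋆`
    (istar : ιPol) (histar : ∀ i, polValue d0 R (P i) ≤ polValue d0 R (P istar))
    (jstar : ιDec) (hjstar : ∀ j, deltaPsi ν1 ν0 (Ψc j) ≤ deltaPsi ν1 ν0 (Ψc jstar))
    -- Assumption 2 (identifiability)
    (η : ℝ) (hη : 0 < η)
    (hident : polValue d0 R (uniformPolicy X K) + η ≤
      (polValue d0 R (P istar) - polValue d0 R (uniformPolicy X K))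
        * deltaPsi ν1 ν0 (Ψc jstar))
    (n : ℕ) (δ : ℝ) (hδ : 0 < δ) (hδ1 : δ < 1)
    -- `n > T₀ = 2K²ι/η²`
    (hwarm : (n : ℝ) > 2 * K ^ 2 * iotaC (Fintype.card ιPol) (Fintype.card ιDec) δ / η ^ 2) :
    ENNReal.ofReal (1 - δ) ≤
      dataLaw n (sampleLaw d0 (uniformPolicy X K) R ν1 ν0)
        {D | ∀ (ihat : ιPol) (jhat : ιDec),
          (∀ (i : ιPol) (j : ιDec),
            VhatU n K D (P i) (Ψc j) - VhatU0 n D (Ψc j)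
              ≤ VhatU n K D (P ihat) (Ψc jhat) - VhatU0 n D (Ψc jhat)) →
          VhatU n K D (P ihat) (Ψc jhat) - VhatU0 n D (Ψc jhat)
            > polValue d0 R (uniformPolicy X K)
              + K * epsD (Fintype.card ιPol) (Fintype.card ιDec) δ n} :=
  igl_lemma4_warm_start_general hK d0 ν1 ν0 R hRmeas hR P hP Ψc hΨ istar jstar η hη hident n δ hδ
    hδ1 hwarm

end IGL
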